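/- arXiv:2206.07904 — 8 statements merged into one kernel-verified Lean document; each statement's English description precedes it below -/
import Mathlib

section
/- Let α be a type, n : ℕ, P : Fin n → α → Prop a family of positive rule bodies, and for each i : Fin n a finite family E i : Fin (m i) → α → Prop of negated-part tests. Define the path formula of rule i at x by F i x := P i x ∧ ∀ j, ¬ E i j x. Assume: (H2) for all i and all k < i there exists j such that for every x, P k x implies E i j x; and (H3) for all i, j and every x, E i j x implies that P k x holds for some k < i. Then for every x and every i: F i x holds if and only if P i x holds and P k x fails for every k < i (i.e., the path formula of rule i holds at x exactly when i is the least index whose positive body is satisfied at x). -/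
/-- Path formula of rule `i` at `x`: positive body plus all negated-part tests failing. -/
def pathF {α : Type*} {n : ℕ} (P : Fin n → α → Prop) {m : Fin n → ℕ}
    (E : ∀ i : Fin n, Fin (m i) → α → Prop) (i : Fin n) (x : α) : Prop :=
  P i x ∧ ∀ j : Fin (m i), ¬ E i j x

section PathFormula

variable {α : Type*} {n : ℕ} {P : Fin n → α → Prop} {m : Fin n → ℕ}
  {E : ∀ i : Fin n, Fin (m i) → α → Prop} {i : Fin n} {x : α}

theorem pathF_forall_lt_not_pos
    (hcover : ∀ k < i, ∃ j : Fin (m i), ∀ y : α, P k y → E i j y) (h : pathF P E i x) :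
    ∀ k < i, ¬ P k x := by
  intro k hk hPk
  obtain ⟨j, hj⟩ := hcover k hk
  exact h.2 j (hj x hPk)

theorem pathF_of_forall_lt_not_pos
    (hsound : ∀ (j : Fin (m i)) (y : α), E i j y → ∃ k < i, P k y)
    (hP : P i x) (hfirst : ∀ k < i, ¬ P k x) : pathF P E i x := by
  refine ⟨hP, fun j hE => ?_⟩
  obtain ⟨k, hk, hPk⟩ := hsound j x hE
  exact hfirst k hk hPk

end PathFormula

/-- Dropping the negated portions of the mutually exclusive path formulas and reading
the positive rules as an ordered decision list preserves the semantics: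
the path formula of rule `i` holds at `x` iff `i` is the least index whose
positive body is satisfied at `x`. -/
theorem path_formula_iff_first_positive_rule
    {α : Type*} {n : ℕ} (P : Fin n → α → Prop) {m : Fin n → ℕ}
    (E : ∀ i : Fin n, Fin (m i) → α → Prop)
    (H2 : ∀ i : Fin n, ∀ k < i, ∃ j : Fin (m i), ∀ x : α, P k x → E i j x)
    (H3 : ∀ (i : Fin n) (j : Fin (m i)) (x : α), E i j x → ∃ k < i, P k x) :
    ∀ (x : α) (i : Fin n),
      pathF P E i x ↔ (P i x ∧ ∀ k < i, ¬ P k x) :=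
  fun _ i => ⟨fun h => ⟨h.1, pathF_forall_lt_not_pos (H2 i) h⟩,
    fun ⟨hP, hfirst⟩ => pathF_of_forall_lt_not_pos (H3 i) hP hfirst⟩
end

section
/- Let T be a decision tree over α with cumulative tests, and let L be the decision list whose rules are the leaves of T in lexicographic order, where the body of the rule for leaf ℓ is the positive formula of ℓ and its value is the value carried by ℓ. Then L is total at every x : α, and for every x the value of L at x equals the value returned by evaluating T at x. -/
/-!
The leaf reached by evaluating `T` at `x` satisfies its own positive formula, since the
evaluation only ever exits a node to the left when that node's test holds.  A leaf that
precedes it lexicographically leaves their common path to the left at a node where the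
evaluation went right, i.e. at a node whose test fails at `x`; that test is a conjunct of
the earlier leaf's positive formula, so no earlier leaf fires.  Hence the first rule of
the decision list that fires is the evaluated leaf.
-/

/-- A decision tree over a type `α` of examples: a finite binary tree where every
internal node carries a test `Q : α → Prop` and every leaf carries a real value. -/
inductive DTree (α : Type*) where
  | leaf (v : ℝ)
  | node (Q : α → Prop) (l r : DTree α)

namespace DTree

open Classical

variable {α : Type*}

/-- A leaf of the tree is identified by its root-to-leaf path: a list of Booleans,
`true` meaning "descend to the left child" and `false` "descend to the right child". -/
def IsLeaf : DTree α → List Bool → Prop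
  | leaf _, [] => True
  | node _ l _, true :: p => IsLeaf l p
  | node _ _ r, false :: p => IsLeaf r p
  | _, _ => False

/-- The value carried by the leaf at a given path (if any). -/
def leafValue : DTree α → List Bool → Option ℝ
  | leaf v, [] => some v
  | node _ l _, true :: p => leafValue l p
  | node _ _ r, false :: p => leafValue r p
  | _, _ => none

/-- Evaluation of the tree at `x`: starting at the root, at each internal node descend
to the left child if the node's test holds at `x` and to the right child otherwise.
`evalPath T x` is the root-to-leaf path of the leaf thus reached. -/
noncomputable def evalPath : DTree α → α → List Bool
  | leaf _, _ => []
  | node Q l r, x => if Q x then true :: evalPath l x else false :: evalPath r x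

/-- The value returned by evaluating the tree at `x`. -/
noncomputable def evalTree : DTree α → α → ℝ
  | leaf v, _ => v
  | node Q l r, x => if Q x then evalTree l x else evalTree r x

/-- The path formula of the leaf at path `p`, at example `x`: the conjunction, over all
internal nodes on the root-to-leaf path, of the test at `x` when the path exits the node
via its left child, and of the negation of the test when it exits via the right child. -/
def pathFormula : DTree α → List Bool → α → Prop
  | leaf _, [], _ => True
  | node Q l _, true :: p, x => Q x ∧ pathFormula l p x
  | node Q _ r, false :: p, x => ¬ Q x ∧ pathFormula r p x
  | _, _, _ => False

/-- The positive formula of the leaf at path `p`, at example `x`: the conjunction of the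
tests at `x` of those internal nodes on the root-to-leaf path that the path exits via the
left child (the empty conjunction being `True`). -/
def posFormula : DTree α → List Bool → α → Prop
  | leaf _, [], _ => True
  | node Q l _, true :: p, x => Q x ∧ posFormula l p x
  | node _ _ r, false :: p, x => posFormula r p x
  | _, _, _ => False

/-- The subtree rooted at the node reached by following a path from the root. -/
def subtreeAt : DTree α → List Bool → Option (DTree α)
  | t, [] => some t
  | node _ l _, true :: p => subtreeAt l p
  | node _ _ r, false :: p => subtreeAt r p
  | leaf _, _ :: _ => none

/-- The test carried by the internal node at a given path (if any). -/
def testAt (T : DTree α) (p : List Bool) : Option (α → Prop) :=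
  match subtreeAt T p with
  | some (node Q _ _) => some Q
  | _ => none

/-- Leaves are ordered lexicographically: every leaf in the left subtree of an internal
node precedes every leaf in its right subtree.  Concretely, path `p` precedes path `q`
iff after some common prefix, `p` goes left where `q` goes right. -/
def leafLT (p q : List Bool) : Prop :=
  ∃ s p' q' : List Bool, p = s ++ true :: p' ∧ q = s ++ false :: q'

/-- The tree has cumulative tests: for every internal node `n` and every strict ancestor
`m` of `n` such that the path from `m` to `n` passes through the left child of `m`,
the test of `n` at `x` implies the test of `m` at `x`, for every `x`. -/
def Cumulative (T : DTree α) : Prop :=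
  ∀ (p q : List Bool) (Qm Qn : α → Prop),
    testAt T p = some Qm → testAt T (p ++ true :: q) = some Qn →
    ∀ x : α, Qn x → Qm x

theorem isLeaf_evalPath (T : DTree α) (x : α) : IsLeaf T (evalPath T x) := by
  induction T with
  | leaf v => simp [IsLeaf, evalPath]
  | node Q l r hl hr => by_cases h : Q x <;> simp [evalPath, h, IsLeaf, hl, hr]

theorem posFormula_evalPath (T : DTree α) (x : α) : posFormula T (evalPath T x) x := by
  induction T with
  | leaf v => simp [posFormula, evalPath]
  | node Q l r hl hr => by_cases h : Q x <;> simp [evalPath, h, posFormula, hl, hr]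

theorem leafValue_evalPath (T : DTree α) (x : α) :
    leafValue T (evalPath T x) = some (evalTree T x) := by
  induction T with
  | leaf v => simp [leafValue, evalPath, evalTree]
  | node Q l r hl hr => by_cases h : Q x <;> simp [evalPath, h, leafValue, evalTree, hl, hr]

theorem not_posFormula_of_leafLT_evalPath {T : DTree α} {x : α} {ℓ : List Bool}
    (h : leafLT ℓ (evalPath T x)) : ¬ posFormula T ℓ x := by
  obtain ⟨s, p, q, rfl, hq⟩ := h
  induction s generalizing T with
  | nil =>
    cases T with
    | leaf v => simp [posFormula]
    | node Q l r =>
      rintro ⟨hQ, -⟩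
      simp [evalPath, hQ] at hq
  | cons b s ih =>
    cases T with
    | leaf v => cases b <;> simp [posFormula]
    | node Q l r =>
      by_cases hQ : Q x <;> cases b <;> simp only [evalPath, hQ, if_true, if_false,
        List.cons_append, List.cons.injEq, true_and, false_and, reduceCtorEq] at hq
      · exact fun hpos => ih hq hpos.2
      · exact ih hq

end DTree

open DTree in
theorem decision_list_of_tree_total_and_equivalent_general
    {α : Type*} (T : DTree α) :
    ∀ x : α,
      (∃ ℓ : List Bool, IsLeaf T ℓ ∧ posFormula T ℓ x) ∧
      ∀ ℓ : List Bool, IsLeaf T ℓ → posFormula T ℓ x →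
        (∀ ℓ' : List Bool, IsLeaf T ℓ' → posFormula T ℓ' x → ℓ' = ℓ ∨ leafLT ℓ ℓ') →
        leafValue T ℓ = some (evalTree T x) := by
  intro x
  refine ⟨⟨evalPath T x, isLeaf_evalPath T x, posFormula_evalPath T x⟩, ?_⟩
  intro ℓ _ hpos hfirst
  rcases hfirst (evalPath T x) (isLeaf_evalPath T x) (posFormula_evalPath T x) with h | h
  · rw [← h]
    exact leafValue_evalPath T x
  · exact absurd hpos (not_posFormula_of_leafLT_evalPath h)

open DTree in
/-- Let `L` be the decision list whose rules are the leaves of a decision tree `T` with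
cumulative tests, taken in lexicographic order, where the body of the rule for leaf `ℓ`
is the positive formula of `ℓ` and its value is the value carried by `ℓ`.  Then `L` is
total at every `x` (some leaf's positive formula holds at `x`), and the value of `L` at
`x` — the value carried by the lexicographically first leaf whose positive formula holds
at `x` — equals the value returned by evaluating `T` at `x`. -/
theorem decision_list_of_tree_total_and_equivalent
    {α : Type*} (T : DTree α) (hT : Cumulative T) :
    ∀ x : α,
      (∃ ℓ : List Bool, IsLeaf T ℓ ∧ posFormula T ℓ x) ∧
      ∀ ℓ : List Bool, IsLeaf T ℓ → posFormula T ℓ x →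
        (∀ ℓ' : List Bool, IsLeaf T ℓ' → posFormula T ℓ' x → ℓ' = ℓ ∨ leafLT ℓ ℓ') →
        leafValue T ℓ = some (evalTree T x) :=
  decision_list_of_tree_total_and_equivalent_general T
end

section
/- Let T be a decision tree over α and let ℓ' and ℓ be leaves with ℓ' lexicographically preceding ℓ, and let n be their lowest common ancestor (so ℓ' lies in the left subtree of n and ℓ lies in the right subtree of n). Then: (a) the path to ℓ exits n via its right child, so the negation of the test of n is one of the conjuncts of the path formula of ℓ; and (b) for every x : α, if the positive formula of ℓ' holds at x then the test of n holds at x. In particular, if the positive formula of some lexicographically earlier leaf holds at x, then the path formula of ℓ fails at x. -/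
namespace DTree

open Classical

variable {α : Type*}

theorem exists_subtreeAt_eq_node_of_testAt_eq_some {T : DTree α} {s : List Bool}
    {Q : α → Prop} (h : testAt T s = some Q) : ∃ l r, subtreeAt T s = some (node Q l r) := by
  rcases hs : subtreeAt T s with _ | _ | ⟨Q', l, r⟩ <;>
    simp only [testAt, hs, reduceCtorEq, Option.some.injEq] at h
  exact ⟨l, r, by rw [h]⟩

theorem pathFormula_of_subtreeAt_append :
    ∀ {T t : DTree α} {s : List Bool}, subtreeAt T s = some t →
      ∀ {q : List Bool} {x : α}, pathFormula T (s ++ q) x → pathFormula t q x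
  | _, _, [], h, _, _, hx => by
      rw [subtreeAt, Option.some.injEq] at h
      subst h
      exact hx
  | node _ l _, _, true :: _, h, _, _, hx => pathFormula_of_subtreeAt_append (T := l) h hx.2
  | node _ _ r, _, false :: _, h, _, _, hx => pathFormula_of_subtreeAt_append (T := r) h hx.2
  | leaf _, _, _ :: _, h, _, _, _ => by simp [subtreeAt] at h

theorem posFormula_of_subtreeAt_append :
    ∀ {T t : DTree α} {s : List Bool}, subtreeAt T s = some t →
      ∀ {q : List Bool} {x : α}, posFormula T (s ++ q) x → posFormula t q x
  | _, _, [], h, _, _, hx => by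
      rw [subtreeAt, Option.some.injEq] at h
      subst h
      exact hx
  | node _ l _, _, true :: _, h, _, _, hx => posFormula_of_subtreeAt_append (T := l) h hx.2
  | node _ _ r, _, false :: _, h, _, _, hx => posFormula_of_subtreeAt_append (T := r) h hx
  | leaf _, _, _ :: _, h, _, _, _ => by simp [subtreeAt] at h

theorem not_test_of_pathFormula_append_false {T : DTree α} {s p : List Bool} {Q : α → Prop}
    (hQ : testAt T s = some Q) {x : α} (hx : pathFormula T (s ++ false :: p) x) : ¬ Q x := by
  obtain ⟨l, r, hsub⟩ := exists_subtreeAt_eq_node_of_testAt_eq_some hQ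
  exact (pathFormula_of_subtreeAt_append hsub hx).1

theorem test_of_posFormula_append_true {T : DTree α} {s p : List Bool} {Q : α → Prop}
    (hQ : testAt T s = some Q) {x : α} (hx : posFormula T (s ++ true :: p) x) : Q x := by
  obtain ⟨l, r, hsub⟩ := exists_subtreeAt_eq_node_of_testAt_eq_some hQ
  exact (posFormula_of_subtreeAt_append hsub hx).1

end DTree

open DTree in
theorem earlier_leaf_positive_blocks_path_formula_general
    {α : Type*} (T : DTree α) (s p' p : List Bool) (Q : α → Prop)
    (hQ : testAt T s = some Q) :
    (∀ x : α, pathFormula T (s ++ false :: p) x → ¬ Q x) ∧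
    (∀ x : α, posFormula T (s ++ true :: p') x → Q x) ∧
    (∀ x : α, posFormula T (s ++ true :: p') x → ¬ pathFormula T (s ++ false :: p) x) :=
  ⟨fun _ => not_test_of_pathFormula_append_false hQ, fun _ => test_of_posFormula_append_true hQ,
    fun _ hpos hpath =>
      not_test_of_pathFormula_append_false hQ hpath (test_of_posFormula_append_true hQ hpos)⟩

open DTree in
/-- Let `ℓ' = s ++ true :: p'` and `ℓ = s ++ false :: p` be leaves of a decision tree
`T` with `ℓ'` lexicographically preceding `ℓ`, and let `n` be their lowest common
ancestor — the internal node at path `s`, carrying test `Q` (so `ℓ'` lies in the left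
subtree of `n` and `ℓ` in its right subtree).  Then (a) the path to `ℓ` exits `n` via
its right child, so `¬ Q x` is one of the conjuncts of the path formula of `ℓ` (hence
the path formula of `ℓ` at `x` implies `¬ Q x`); and (b) for every `x`, if the positive
formula of `ℓ'` holds at `x` then `Q x` holds.  In particular, if the positive formula
of the lexicographically earlier leaf `ℓ'` holds at `x`, then the path formula of `ℓ`
fails at `x`. -/
theorem earlier_leaf_positive_blocks_path_formula
    {α : Type*} (T : DTree α) (s p' p : List Bool) (Q : α → Prop)
    (hQ : testAt T s = some Q)
    (hℓ' : IsLeaf T (s ++ true :: p')) (hℓ : IsLeaf T (s ++ false :: p)) :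
    (∀ x : α, pathFormula T (s ++ false :: p) x → ¬ Q x) ∧
    (∀ x : α, posFormula T (s ++ true :: p') x → Q x) ∧
    (∀ x : α, posFormula T (s ++ true :: p') x → ¬ pathFormula T (s ++ false :: p) x) :=
  earlier_leaf_positive_blocks_path_formula_general T s p' p Q hQ
end

section
/- Let n, m : ℕ, P : Fin n → α → Prop, Q : Fin m → α → Prop, and let ⪯ be any linear order on Fin n × Fin m that extends the componentwise product order (i.e., i ≤ i' and j ≤ j' imply (i, j) ⪯ (i', j')). Fix x : α such that P i x holds for some i and Q j x holds for some j. Then the ⪯-least element of the set S(x) = {(i, j) | P i x ∧ Q j x} is the pair (i*, j*), where i* is the least index with P i* x and j* is the least index with Q j* x. In particular, the first satisfied combined rule is the same for every linear order extending the product order. -/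
theorem least_combined_rule_independent_of_linearization_general
    {α : Type*} {n m : ℕ} (P : Fin n → α → Prop) (Q : Fin m → α → Prop)
    (L : LinearOrder (Fin n × Fin m))
    (hL : ∀ (i i' : Fin n) (j j' : Fin m), i ≤ i' → j ≤ j' → L.le (i, j) (i', j'))
    (x : α)
    (istar : Fin n) (jstar : Fin m)
    (histar : P istar x ∧ ∀ k < istar, ¬ P k x)
    (hjstar : Q jstar x ∧ ∀ k < jstar, ¬ Q k x) :
    (P istar x ∧ Q jstar x) ∧
      ∀ p : Fin n × Fin m, P p.1 x ∧ Q p.2 x → L.le (istar, jstar) p := by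
  refine ⟨⟨histar.1, hjstar.1⟩, ?_⟩
  rintro ⟨i, j⟩ ⟨hPi, hQj⟩
  have hi : istar ≤ i := not_lt.mp fun hlt => histar.2 i hlt hPi
  have hj : jstar ≤ j := not_lt.mp fun hlt => hjstar.2 j hlt hQj
  exact hL _ _ _ _ hi hj

/-- When combining two decision lists with rule bodies `P : Fin n → α → Prop` and
`Q : Fin m → α → Prop`, let `L` be any linear order on `Fin n × Fin m` extending the
componentwise product order.  Fix `x` such that some `P i x` and some `Q j x` hold,
and let `i*` (resp. `j*`) be the least index with `P i* x` (resp. `Q j* x`).  Then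
`(i*, j*)` is the `L`-least element of `{(i, j) | P i x ∧ Q j x}`; in particular the
first satisfied combined rule is the same for every linear order extending the product
order. -/
theorem least_combined_rule_independent_of_linearization
    {α : Type*} {n m : ℕ} (P : Fin n → α → Prop) (Q : Fin m → α → Prop)
    (L : LinearOrder (Fin n × Fin m))
    (hL : ∀ (i i' : Fin n) (j j' : Fin m), i ≤ i' → j ≤ j' → L.le (i, j) (i', j'))
    (x : α)
    (htotP : ∃ i, P i x) (htotQ : ∃ j, Q j x)
    (istar : Fin n) (jstar : Fin m)
    (histar : P istar x ∧ ∀ k < istar, ¬ P k x)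
    (hjstar : Q jstar x ∧ ∀ k < jstar, ¬ Q k x) :
    (P istar x ∧ Q jstar x) ∧
      ∀ p : Fin n × Fin m, P p.1 x ∧ Q p.2 x → L.le (istar, jstar) p :=
  least_combined_rule_independent_of_linearization_general P Q L hL x istar jstar histar hjstar
end

section
/- Let (P, w) be a decision list of length n over α and (Q, v) a decision list of length m over α, and assume both are total at every x : α. Define the combined decision list over Fin n × Fin m, ordered lexicographically, whose rule (i, j) has body P i x ∧ Q j x and value w i + v j. Then the combined list is total at every x, and for every x its value at x equals the value of the first list at x plus the value of the second list at x. -/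
/-!
The active rule of a decision list is the least element of the set of satisfied rules. For the
combined list this least element is the pair of active rules of the two lists: a pair satisfying
both bodies is componentwise above that pair, hence lexicographically above it. Since least
elements are unique, the combined value is `w i + v j`.
-/

def lexLT {n m : ℕ} (p q : Fin n × Fin m) : Prop :=
  p.1 < q.1 ∨ (p.1 = q.1 ∧ p.2 < q.2)

theorem isLeast_of_forall_lt_notMem {ι : Type*} [LinearOrder ι] {s : Set ι} {i : ι}
    (hi : i ∈ s) (h : ∀ k < i, k ∉ s) : IsLeast s i :=
  ⟨hi, fun _ hk => not_lt.1 fun hlt => h _ hlt hk⟩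

theorem isLeast_toLex_prod {ι κ : Type*} [PartialOrder ι] [Preorder κ] {s : Set ι} {t : Set κ}
    {i : ι} {j : κ} (hi : IsLeast s i) (hj : IsLeast t j) :
    IsLeast (ofLex ⁻¹' s ×ˢ t) (toLex (i, j)) :=
  ⟨⟨hi.1, hj.1⟩, fun r hr =>
    Prod.Lex.toLex_mono (show (i, j) ≤ ofLex r from ⟨hi.2 hr.1, hj.2 hr.2⟩)⟩

/-- Correctness of the pairwise combination step for boosted (sum-combined) decision
lists.  Let `(P, w)` and `(Q, v)` be decision lists over `α`, both total at every `x`.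
Form the combined decision list over `Fin n × Fin m`, ordered lexicographically, whose
rule `(i, j)` has body `P i x ∧ Q j x` and value `w i + v j`.  Then the combined list
is total at every `x`, and its value at `x` — the value `w p.1 + v p.2` of the
lexicographically first satisfied combined rule `p` — equals the value of the first
list at `x` (namely `w i` for the least `i` with `P i x`) plus the value of the second
list at `x`. -/
theorem combined_decision_list_value_eq_sum
    {α : Type*} {n m : ℕ}
    (P : Fin n → α → Prop) (w : Fin n → ℝ)
    (Q : Fin m → α → Prop) (v : Fin m → ℝ)
    (hP : ∀ x : α, ∃ i, P i x) (hQ : ∀ x : α, ∃ j, Q j x) :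
    ∀ x : α,
      (∃ p : Fin n × Fin m, P p.1 x ∧ Q p.2 x) ∧
      ∀ (p : Fin n × Fin m) (i : Fin n) (j : Fin m),
        ((P p.1 x ∧ Q p.2 x) ∧ ∀ q : Fin n × Fin m, lexLT q p → ¬ (P q.1 x ∧ Q q.2 x)) →
        (P i x ∧ ∀ k < i, ¬ P k x) →
        (Q j x ∧ ∀ k < j, ¬ Q k x) →
        w p.1 + v p.2 = w i + v j := by
  intro x
  refine ⟨?_, ?_⟩
  · obtain ⟨i, hi⟩ := hP x
    obtain ⟨j, hj⟩ := hQ x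
    exact ⟨(i, j), hi, hj⟩
  · rintro p i j ⟨hp, hp_first⟩ ⟨hi, hi_first⟩ ⟨hj, hj_first⟩
    let S : Set (Fin n ×ₗ Fin m) := ofLex ⁻¹' {k | P k x} ×ˢ {k | Q k x}
    have hp_least : IsLeast S (toLex p) :=
      isLeast_of_forall_lt_notMem hp fun r hr => hp_first (ofLex r) (Prod.Lex.toLex_lt_toLex.1 hr)
    have hij_least : IsLeast S (toLex (i, j)) :=
      isLeast_toLex_prod (isLeast_of_forall_lt_notMem hi hi_first)
        (isLeast_of_forall_lt_notMem hj hj_first)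
    rw [toLex_inj.1 (hp_least.unique hij_least)]
end

section
/- Let (P, w) be a decision list of length n over α and (Q, v) a decision list of length m over α, both total at every x : α, and form the combined decision list over Fin n × Fin m ordered lexicographically, whose rule (i, j) has body P i x ∧ Q j x. Then for every x : α and every pair (i, j): rule (i, j) is active at x in the combined list if and only if rule i is active at x in the first list and rule j is active at x in the second list. -/
/- A satisfied rule `k` before `i` in the first list, paired with any rule satisfied in the
second list (one exists by totality), gives a satisfied combined rule before `(i, j)`; every
other implication is immediate from the definition of the lexicographic order. -/

def IsActive {ι α : Type*} (r : ι → ι → Prop) (P : ι → α → Prop) (i : ι) (x : α) : Prop :=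
  P i x ∧ ∀ k, r k i → ¬ P k x

theorem isActive_prodLex_iff {ι κ α : Type*} {r : ι → ι → Prop} {s : κ → κ → Prop}
    {P : ι → α → Prop} {Q : κ → α → Prop} {x : α} (hQ : ∃ j, Q j x) (i : ι) (j : κ) :
    IsActive (Prod.Lex r s) (fun q x => P q.1 x ∧ Q q.2 x) (i, j) x ↔
      IsActive r P i x ∧ IsActive s Q j x := by
  constructor
  · rintro ⟨⟨hPi, hQj⟩, hmin⟩
    refine ⟨⟨hPi, fun k hk hPk => ?_⟩, ⟨hQj, fun k hk hQk => ?_⟩⟩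
    · obtain ⟨j', hQj'⟩ := hQ
      exact hmin (k, j') (Prod.Lex.left _ _ hk) ⟨hPk, hQj'⟩
    · exact hmin (i, k) (Prod.Lex.right _ hk) ⟨hPi, hQk⟩
  · rintro ⟨⟨hPi, hiMin⟩, ⟨hQj, hjMin⟩⟩
    refine ⟨⟨hPi, hQj⟩, fun q hq ⟨hPq, hQq⟩ => ?_⟩
    rcases Prod.lex_def.mp hq with hlt | ⟨-, hlt⟩
    · exact hiMin q.1 hlt hPq
    · exact hjMin q.2 hlt hQq

theorem lexLT_iff_prodLex {n m : ℕ} (p q : Fin n × Fin m) :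
    lexLT p q ↔ Prod.Lex (· < ·) (· < ·) p q :=
  Prod.lex_def.symm

theorem combined_rule_active_iff_general
    {α : Type*} {n m : ℕ}
    (P : Fin n → α → Prop)
    (Q : Fin m → α → Prop)
    (hQ : ∀ x : α, ∃ j, Q j x) :
    ∀ (x : α) (i : Fin n) (j : Fin m),
      ((P i x ∧ Q j x) ∧
          ∀ q : Fin n × Fin m, lexLT q (i, j) → ¬ (P q.1 x ∧ Q q.2 x)) ↔
        ((P i x ∧ ∀ k < i, ¬ P k x) ∧ (Q j x ∧ ∀ k < j, ¬ Q k x)) := by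
  intro x i j
  simpa only [IsActive, lexLT_iff_prodLex] using
    isActive_prodLex_iff (r := (· < ·)) (s := (· < ·)) (P := P) (hQ x) i j

/-- Let `(P, w)` and `(Q, v)` be decision lists over `α`, both total at every `x`, and
form the combined decision list over `Fin n × Fin m` ordered lexicographically, whose
rule `(i, j)` has body `P i x ∧ Q j x`.  Then rule `(i, j)` is active at `x` in the
combined list iff rule `i` is active at `x` in the first list and rule `j` is active
at `x` in the second list. -/
theorem combined_rule_active_iff
    {α : Type*} {n m : ℕ}
    (P : Fin n → α → Prop) (w : Fin n → ℝ)
    (Q : Fin m → α → Prop) (v : Fin m → ℝ)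
    (hP : ∀ x : α, ∃ i, P i x) (hQ : ∀ x : α, ∃ j, Q j x) :
    ∀ (x : α) (i : Fin n) (j : Fin m),
      ((P i x ∧ Q j x) ∧
          ∀ q : Fin n × Fin m, lexLT q (i, j) → ¬ (P q.1 x ∧ Q q.2 x)) ↔
        ((P i x ∧ ∀ k < i, ¬ P k x) ∧ (Q j x ∧ ∀ k < j, ¬ Q k x)) :=
  combined_rule_active_iff_general P Q hQ
end

section
/- Let N : ℕ and for each t : Fin N let (P t, w t) be a decision list of length n t over α that is total at every x : α. Define the combined decision list indexed by the product type Π t, Fin (n t), ordered lexicographically with priority to smaller t, whose rule c has body (∀ t, P t (c t) x) and value ∑ t, w t (c t). Then the combined list is total at every x, and for every x its value at x equals ∑ t, (value of the t-th list at x). -/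
/-- The lexicographic order (with priority to smaller `t`) on the product
`Π t, Fin (n t)`: `c < c'` iff at the least index `t` where they differ, `c t < c' t`. -/
def piLexLT {N : ℕ} {n : Fin N → ℕ} (c c' : ∀ t, Fin (n t)) : Prop :=
  ∃ t : Fin N, (∀ s < t, c s = c' s) ∧ c t < c' t

-- `piLexLT c c'` unfolds to `toLex c < toLex c'` in Mathlib's `Pi.Lex` order.
theorem piLexLT_of_lt {N : ℕ} {n : Fin N → ℕ} {c c' : ∀ t, Fin (n t)} (h : c < c') :
    piLexLT c c' :=
  Pi.toLex_strictMono h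

theorem eq_of_le_of_forall_piLexLT_not {N : ℕ} {n : Fin N → ℕ} {Q : (∀ t, Fin (n t)) → Prop}
    {a c : ∀ t, Fin (n t)} (hmin : ∀ c', piLexLT c' c → ¬ Q c') (ha : Q a) (hle : a ≤ c) :
    a = c :=
  by_contra fun hne => hmin a (piLexLT_of_lt (lt_of_le_of_ne hle hne)) ha

theorem le_of_forall_lt_not {β : Type*} [LinearOrder β] {p : β → Prop} {i j : β}
    (hfirst : ∀ k < i, ¬ p k) (hj : p j) : i ≤ j :=
  not_lt.1 fun hji => hfirst j hji hj

/-- Correctness of the incremental combination of an ensemble of `N` boosted trees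
(decision lists) into a single decision list.  For each `t : Fin N` let `(P t, w t)` be
a decision list of length `n t` over `α`, total at every `x`.  The combined decision
list is indexed by `Π t, Fin (n t)`, ordered lexicographically with priority to smaller
`t`; its rule `c` has body `∀ t, P t (c t) x` and value `∑ t, w t (c t)`.  Then the
combined list is total at every `x`, and its value at `x` — the value of its first
(lexicographically least) satisfied rule `c` — equals `∑ t, w t (a t)` where, for each
`t`, `a t` is the active rule of the `t`-th list at `x`, i.e. the sum over `t` of the
value of the `t`-th list at `x`. -/
theorem ensemble_combined_decision_list_value_eq_sum
    {α : Type*} {N : ℕ} {n : Fin N → ℕ}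
    (P : ∀ t : Fin N, Fin (n t) → α → Prop) (w : ∀ t : Fin N, Fin (n t) → ℝ)
    (hP : ∀ (t : Fin N) (x : α), ∃ i, P t i x) :
    ∀ x : α,
      (∃ c : ∀ t, Fin (n t), ∀ t, P t (c t) x) ∧
      ∀ (c a : ∀ t, Fin (n t)),
        ((∀ t, P t (c t) x) ∧ ∀ c' : ∀ t, Fin (n t), piLexLT c' c → ¬ ∀ t, P t (c' t) x) →
        (∀ t, P t (a t) x ∧ ∀ k < a t, ¬ P t k x) →
        (∑ t, w t (c t)) = ∑ t, w t (a t) := by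
  intro x
  refine ⟨Classical.axiom_of_choice fun t => hP t x, ?_⟩
  rintro c a ⟨hc, hmin⟩ ha
  -- The componentwise active rules form a satisfied rule below `c`, so lex-minimality forces `a = c`.
  have hac : a = c :=
    eq_of_le_of_forall_piLexLT_not hmin (fun t => (ha t).1)
      fun t => le_of_forall_lt_not (ha t).2 (hc t)
  rw [hac]
end

section
/- Let (P, w) be a decision list of length n over α, and suppose there are indices j < k such that for every x : α, P k x implies P j x (rule k is subsumed by the earlier rule j). Let the reduced decision list be obtained by deleting rule k (keeping the remaining rules in their original order with their original values). Then for every x : α, the original list is total at x if and only if the reduced list is total at x, and whenever total their values at x are equal. -/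
/-! Whenever rule `k` fires so does the earlier rule `j`, so `k` is never the first satisfied
rule; and since `Fin.succAbove k` is strictly monotone, the first satisfied rule of the full
list is also the first satisfied rule of the reduced one. -/

theorem isLeast_setOf_iff {ι : Type*} [LinearOrder ι] {p : ι → Prop} {i : ι} :
    IsLeast {l | p l} i ↔ p i ∧ ∀ l < i, ¬ p l := by
  simp only [IsLeast, lowerBounds, Set.mem_ofPred_eq, ← not_lt]
  exact and_congr_right' <| forall_congr' fun _ => imp_not_comm

theorem IsLeast.preimage_of_strictMono {ι κ : Type*} [LinearOrder ι] [Preorder κ]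
    {f : ι → κ} (hf : StrictMono f) {s : Set κ} {m : ι} (h : IsLeast s (f m)) :
    IsLeast (f ⁻¹' s) m :=
  ⟨h.1, fun _ hl => hf.le_iff_le.1 (h.2 hl)⟩

theorem IsLeast.ne_of_lt_of_imp {ι : Type*} [PartialOrder ι] {s : Set ι} {i j k : ι}
    (h : IsLeast s i) (hjk : j < k) (hsub : k ∈ s → j ∈ s) : i ≠ k := by
  rintro rfl
  exact (h.2 (hsub h.1)).not_gt hjk

theorem exists_succAbove_iff_of_imp {n : ℕ} {p : Fin (n + 1) → Prop} {j k : Fin (n + 1)}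
    (hjk : j ≠ k) (hsub : p k → p j) : (∃ i, p i) ↔ ∃ i : Fin n, p (k.succAbove i) := by
  rw [Fin.exists_iff_succAbove k, or_iff_right_of_imp]
  intro hk
  obtain ⟨m, hm⟩ := Fin.exists_succAbove_eq hjk
  exact ⟨m, hm ▸ hsub hk⟩

/-- Soundness of the subsumption-based between-clause reduction (the `reduceList` step
of SCoTE).  Let `(P, w)` be a decision list of length `n + 1` over `α` with indices
`j < k` such that for every `x`, `P k x → P j x` (rule `k` is subsumed by the earlier
rule `j`).  Let the reduced decision list be obtained by deleting rule `k`: its `i`-th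
rule is rule `k.succAbove i` of the original list (the remaining rules in their
original order with their original values).  Then for every `x`, the original list is
total at `x` iff the reduced list is total at `x`, and whenever total their values at
`x` (the value of the first satisfied rule) are equal. -/
theorem delete_subsumed_rule_sound
    {α : Type*} {n : ℕ}
    (P : Fin (n + 1) → α → Prop) (w : Fin (n + 1) → ℝ)
    (j k : Fin (n + 1)) (hjk : j < k)
    (hsub : ∀ x : α, P k x → P j x) :
    ∀ x : α,
      ((∃ i, P i x) ↔ ∃ i : Fin n, P (k.succAbove i) x) ∧
      ∀ (i : Fin (n + 1)) (i' : Fin n),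
        (P i x ∧ ∀ l < i, ¬ P l x) →
        (P (k.succAbove i') x ∧ ∀ l < i', ¬ P (k.succAbove l) x) →
        w i = w (k.succAbove i') := by
  intro x
  refine ⟨exists_succAbove_iff_of_imp hjk.ne (hsub x), fun i i' hi hi' => ?_⟩
  have hleast := isLeast_setOf_iff (p := fun l => P l x) |>.2 hi
  have hleast' := isLeast_setOf_iff (p := fun l => P (k.succAbove l) x) |>.2 hi'
  obtain ⟨m, rfl⟩ := Fin.exists_succAbove_eq (hleast.ne_of_lt_of_imp hjk (hsub x))
  rw [(hleast.preimage_of_strictMono (Fin.strictMono_succAbove k)).unique hleast']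
end
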